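/- A latent outcome bridge identifies the counterfactual placebo mean (step (a) of the proof of Theorem 1): Assume (i) the negative control assumption (Y₀, W) ⫫ (Z, R) | (U, X); (ii) positivity: for all (u, x), P(U = u, X = x, R = 0) > 0 implies P(U = u, X = x, R = 1) > 0; (iii) h : 𝒲 × 𝒳 → ℝ satisfies the latent bridge equation E[ Y₀ | U = u, X = x, R = 1 ] = E[ h(W, X) | U = u, X = x, R = 1 ] for every (u, x) with P(U = u, X = x, R = 1) > 0; (iv) P(R = 0) > 0. Then E[ Y₀ | R = 0 ] = E[ h(W, X) | R = 0 ]. -/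

import Mathlib

open Finset

noncomputable section

open scoped Classical

variable {Ω : Type*} [Fintype Ω]

/-- Probability of an event `A` under the weight function `p`. -/
def pr (p : Ω → ℝ) (A : Ω → Prop) : ℝ := ∑ ω, if A ω then p ω else 0

/-- Expectation of a real random variable `Y` under the weight function `p`. -/
def ex (p : Ω → ℝ) (Y : Ω → ℝ) : ℝ := ∑ ω, p ω * Y ω

/-- Conditional probability `P(A | B)`. -/
def cpr (p : Ω → ℝ) (A B : Ω → Prop) : ℝ := pr p (fun ω => A ω ∧ B ω) / pr p B

/-- Conditional expectation `E[Y | B]`. -/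
def cex (p : Ω → ℝ) (Y : Ω → ℝ) (B : Ω → Prop) : ℝ :=
  (∑ ω, if B ω then p ω * Y ω else 0) / pr p B

/-- Numerator of a conditional expectation. -/
def prNum (p : Ω → ℝ) (f : Ω → ℝ) (B : Ω → Prop) : ℝ :=
  ∑ ω, if B ω then p ω * f ω else 0

lemma cex_eq (p : Ω → ℝ) (f : Ω → ℝ) (B : Ω → Prop) :
    cex p f B = prNum p f B / pr p B := rfl

lemma pr_congr (p : Ω → ℝ) {A B : Ω → Prop} (h : ∀ ω, A ω ↔ B ω) :
    pr p A = pr p B := by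
  unfold pr
  exact Finset.sum_congr rfl fun ω _ => by simp only [h ω]

lemma pr_nonneg (p : Ω → ℝ) (hp : ∀ ω, 0 ≤ p ω) (A : Ω → Prop) : 0 ≤ pr p A :=
  Finset.sum_nonneg fun ω _ => by by_cases hA : A ω <;> simp [hA, hp ω]

lemma pr_mono (p : Ω → ℝ) (hp : ∀ ω, 0 ≤ p ω) {A B : Ω → Prop}
    (h : ∀ ω, A ω → B ω) : pr p A ≤ pr p B := by
  refine Finset.sum_le_sum fun ω _ => ?_
  by_cases hA : A ω
  · simp [hA, h ω hA]
  · by_cases hB : B ω <;> simp [hA, hB, hp ω]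

lemma pr_zero_forall (p : Ω → ℝ) (hp : ∀ ω, 0 ≤ p ω) {A : Ω → Prop}
    (h : pr p A = 0) : ∀ ω, A ω → p ω = 0 := by
  intro ω hA
  have hnn : ∀ i ∈ Finset.univ, (0:ℝ) ≤ if A i then p i else 0 := by
    intro i _; by_cases hA' : A i <;> simp [hA', hp i]
  have := (Finset.sum_eq_zero_iff_of_nonneg hnn).mp h ω (mem_univ ω)
  simpa [hA] using this

lemma pr_sum_fiber (p : Ω → ℝ) {𝒵 : Type*} [Fintype 𝒵] (Z : Ω → 𝒵) (A : Ω → Prop) :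
    ∑ z, pr p (fun ω => A ω ∧ Z ω = z) = pr p A := by
  simp only [pr]
  rw [Finset.sum_comm]
  refine Finset.sum_congr rfl fun ω _ => ?_
  rw [Finset.sum_eq_single (Z ω)]
  · by_cases hA : A ω
    · rw [if_pos ⟨hA, rfl⟩, if_pos hA]
    · rw [if_neg (fun hc => hA hc.1), if_neg hA]
  · intro z _ hz
    exact if_neg (fun hc => hz hc.2.symm)
  · intro hmem; exact absurd (mem_univ _) hmem

lemma prNum_decomp (p : Ω → ℝ) {𝒲 : Type*} [Fintype 𝒲] (Y0 : Ω → ℝ) (W : Ω → 𝒲)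
    (G : ℝ → 𝒲 → ℝ) (B : Ω → Prop) :
    prNum p (fun ω => G (Y0 ω) (W ω)) B
      = ∑ y ∈ Finset.univ.image Y0, ∑ w,
          G y w * pr p (fun ω => (Y0 ω = y ∧ W ω = w) ∧ B ω) := by
  simp only [prNum, pr]
  simp_rw [Finset.mul_sum]
  rw [Finset.sum_congr rfl fun (y:ℝ) (_ : y ∈ Finset.univ.image Y0) => Finset.sum_comm,
    Finset.sum_comm]
  refine Finset.sum_congr rfl fun ω _ => ?_
  by_cases hB : B ω
  · rw [if_pos hB, Finset.sum_eq_single (Y0 ω)]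
    · rw [Finset.sum_eq_single (W ω)]
      · rw [if_pos ⟨⟨rfl, rfl⟩, hB⟩]; ring
      · intro w _ hw
        rw [if_neg (fun hc => hw hc.1.2.symm), mul_zero]
      · intro hmem; exact absurd (mem_univ _) hmem
    · intro y _ hy
      refine Finset.sum_eq_zero fun w _ => ?_
      rw [if_neg (fun hc => hy hc.1.1.symm), mul_zero]
    · intro hy; exact absurd (Finset.mem_image_of_mem Y0 (mem_univ ω)) hy
  · rw [if_neg hB]
    symm
    refine Finset.sum_eq_zero fun y _ => Finset.sum_eq_zero fun w _ => ?_
    rw [if_neg (fun hc => hB hc.2), mul_zero]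

lemma prNum_split (p : Ω → ℝ) (f : Ω → ℝ) {𝒰 𝒳 : Type*} [Fintype 𝒰] [Fintype 𝒳]
    (U : Ω → 𝒰) (X : Ω → 𝒳) (C : Ω → Prop) :
    (∑ u, ∑ x, prNum p f (fun ω => U ω = u ∧ X ω = x ∧ C ω)) = prNum p f C := by
  simp only [prNum]
  rw [Finset.sum_congr rfl fun (u:𝒰) (_ : u ∈ (Finset.univ : Finset 𝒰)) => Finset.sum_comm,
    Finset.sum_comm]
  refine Finset.sum_congr rfl fun ω _ => ?_
  rw [Finset.sum_eq_single (U ω)]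
  · rw [Finset.sum_eq_single (X ω)]
    · by_cases hC : C ω
      · rw [if_pos ⟨rfl, rfl, hC⟩, if_pos hC]
      · rw [if_neg (fun hc => hC hc.2.2), if_neg hC]
    · intro x _ hx
      exact if_neg (fun hc => hx hc.2.1.symm)
    · intro hmem; exact absurd (mem_univ _) hmem
  · intro u _ hu
    exact Finset.sum_eq_zero fun x _ => if_neg (fun hc => hu hc.1.symm)
  · intro hmem; exact absurd (mem_univ _) hmem

/-- A latent outcome bridge identifies the counterfactual placebo mean
(step (a) of the proof of Theorem 1). -/
theorem latent_outcome_bridge_identifies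
    {𝒳 𝒰 𝒵 𝒲 : Type*} [Fintype 𝒳] [Fintype 𝒰] [Fintype 𝒵] [Fintype 𝒲]
    (p : Ω → ℝ) (hp : ∀ ω, 0 ≤ p ω) (hp1 : ∑ ω, p ω = 1)
    (R : Ω → Bool) (X : Ω → 𝒳) (U : Ω → 𝒰) (Z : Ω → 𝒵) (W : Ω → 𝒲)
    (Y0 : Ω → ℝ) (h : 𝒲 → 𝒳 → ℝ)
    -- (i) negative control assumption: (Y₀, W) ⫫ (Z, R) | (U, X)
    (hNC : ∀ (y : ℝ) (w : 𝒲) (z : 𝒵) (r : Bool) (u : 𝒰) (x : 𝒳),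
      0 < pr p (fun ω => U ω = u ∧ X ω = x) →
      cpr p (fun ω => (Y0 ω = y ∧ W ω = w) ∧ (Z ω = z ∧ R ω = r))
          (fun ω => U ω = u ∧ X ω = x)
        = cpr p (fun ω => Y0 ω = y ∧ W ω = w) (fun ω => U ω = u ∧ X ω = x)
          * cpr p (fun ω => Z ω = z ∧ R ω = r) (fun ω => U ω = u ∧ X ω = x))
    -- (ii) positivity
    (hPos : ∀ (u : 𝒰) (x : 𝒳),
      0 < pr p (fun ω => U ω = u ∧ X ω = x ∧ R ω = false) →
      0 < pr p (fun ω => U ω = u ∧ X ω = x ∧ R ω = true))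
    -- (iii) latent bridge equation
    (hBridge : ∀ (u : 𝒰) (x : 𝒳), 0 < pr p (fun ω => U ω = u ∧ X ω = x ∧ R ω = true) →
      cex p Y0 (fun ω => U ω = u ∧ X ω = x ∧ R ω = true)
        = cex p (fun ω => h (W ω) (X ω)) (fun ω => U ω = u ∧ X ω = x ∧ R ω = true))
    -- (iv)
    (hR0 : 0 < pr p (fun ω => R ω = false)) :
    cex p Y0 (fun ω => R ω = false)
      = cex p (fun ω => h (W ω) (X ω)) (fun ω => R ω = false) := by
  -- Stratum-wise numerator equality
  have hNfinal : ∀ (u : 𝒰) (x : 𝒳),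
      prNum p Y0 (fun ω => U ω = u ∧ X ω = x ∧ R ω = false)
        = prNum p (fun ω => h (W ω) (X ω)) (fun ω => U ω = u ∧ X ω = x ∧ R ω = false) := by
    intro u x
    by_cases h0 : 0 < pr p (fun ω => U ω = u ∧ X ω = x ∧ R ω = false)
    · have h1 := hPos u x h0
      have hux : 0 < pr p (fun ω => U ω = u ∧ X ω = x) :=
        lt_of_lt_of_le h0 (pr_mono p hp fun ω hw => ⟨hw.1, hw.2.1⟩)
      have hq : pr p (fun ω => U ω = u ∧ X ω = x) ≠ 0 := ne_of_gt hux
      -- NC consequence, summed over z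
      have NCkey : ∀ (y : ℝ) (w : 𝒲) (r : Bool),
          pr p (fun ω => (Y0 ω = y ∧ W ω = w) ∧ U ω = u ∧ X ω = x ∧ R ω = r)
            * pr p (fun ω => U ω = u ∧ X ω = x)
          = pr p (fun ω => (Y0 ω = y ∧ W ω = w) ∧ U ω = u ∧ X ω = x)
            * pr p (fun ω => U ω = u ∧ X ω = x ∧ R ω = r) := by
        intro y w r
        have e1 : ∀ z : 𝒵,
            pr p (fun ω => ((Y0 ω = y ∧ W ω = w) ∧ (Z ω = z ∧ R ω = r)) ∧ U ω = u ∧ X ω = x)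
              * pr p (fun ω => U ω = u ∧ X ω = x)
            = pr p (fun ω => (Y0 ω = y ∧ W ω = w) ∧ U ω = u ∧ X ω = x)
              * pr p (fun ω => (Z ω = z ∧ R ω = r) ∧ U ω = u ∧ X ω = x) := by
          intro z
          have e := hNC y w z r u x hux
          simp only [cpr] at e
          field_simp at e
          refine mul_right_cancel₀ hq ?_
          linear_combination (pr p (fun ω => U ω = u ∧ X ω = x)) * e
        have lhs_fib :
            pr p (fun ω => (Y0 ω = y ∧ W ω = w) ∧ U ω = u ∧ X ω = x ∧ R ω = r)
            = ∑ z, pr p (fun ω => ((Y0 ω = y ∧ W ω = w) ∧ (Z ω = z ∧ R ω = r)) ∧ U ω = u ∧ X ω = x) := by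
          rw [← pr_sum_fiber p Z (fun ω => (Y0 ω = y ∧ W ω = w) ∧ U ω = u ∧ X ω = x ∧ R ω = r)]
          exact Finset.sum_congr rfl fun z _ => pr_congr p (fun ω => by tauto)
        have rhs_fib :
            pr p (fun ω => U ω = u ∧ X ω = x ∧ R ω = r)
            = ∑ z, pr p (fun ω => (Z ω = z ∧ R ω = r) ∧ U ω = u ∧ X ω = x) := by
          rw [← pr_sum_fiber p Z (fun ω => U ω = u ∧ X ω = x ∧ R ω = r)]
          exact Finset.sum_congr rfl fun z _ => pr_congr p (fun ω => by tauto)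
        rw [lhs_fib, rhs_fib, Finset.sum_mul, Finset.mul_sum]
        exact Finset.sum_congr rfl fun z _ => e1 z
      -- key numerator identity
      have key : ∀ (G : ℝ → 𝒲 → ℝ) (r : Bool),
          prNum p (fun ω => G (Y0 ω) (W ω)) (fun ω => U ω = u ∧ X ω = x ∧ R ω = r)
            * pr p (fun ω => U ω = u ∧ X ω = x)
          = pr p (fun ω => U ω = u ∧ X ω = x ∧ R ω = r)
            * (∑ y ∈ Finset.univ.image Y0, ∑ w,
                G y w * pr p (fun ω => (Y0 ω = y ∧ W ω = w) ∧ U ω = u ∧ X ω = x)) := by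
        intro G r
        have hd : prNum p (fun ω => G (Y0 ω) (W ω)) (fun ω => U ω = u ∧ X ω = x ∧ R ω = r)
            = ∑ y ∈ Finset.univ.image Y0, ∑ w,
                G y w * pr p (fun ω => (Y0 ω = y ∧ W ω = w) ∧ U ω = u ∧ X ω = x ∧ R ω = r) :=
          prNum_decomp p Y0 W G (fun ω => U ω = u ∧ X ω = x ∧ R ω = r)
        rw [hd, Finset.sum_mul, Finset.mul_sum]
        refine Finset.sum_congr rfl fun y _ => ?_
        rw [Finset.sum_mul, Finset.mul_sum]
        refine Finset.sum_congr rfl fun w _ => ?_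
        linear_combination G y w * NCkey y w r
      -- replace h (W ω) (X ω) by h (W ω) x inside the stratum
      have hsub : ∀ r : Bool,
          prNum p (fun ω => h (W ω) (X ω)) (fun ω => U ω = u ∧ X ω = x ∧ R ω = r)
            = prNum p (fun ω => h (W ω) x) (fun ω => U ω = u ∧ X ω = x ∧ R ω = r) := by
        intro r
        simp only [prNum]
        refine Finset.sum_congr rfl fun ω _ => ?_
        by_cases hc : U ω = u ∧ X ω = x ∧ R ω = r
        · rw [if_pos hc, if_pos hc, hc.2.1]
        · rw [if_neg hc, if_neg hc]
      -- bridge: numerators at R = true agree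
      have hq1 : pr p (fun ω => U ω = u ∧ X ω = x ∧ R ω = true) ≠ 0 := ne_of_gt h1
      have hb := hBridge u x h1
      rw [cex_eq, cex_eq, div_eq_div_iff hq1 hq1] at hb
      have hbN : prNum p Y0 (fun ω => U ω = u ∧ X ω = x ∧ R ω = true)
          = prNum p (fun ω => h (W ω) (X ω)) (fun ω => U ω = u ∧ X ω = x ∧ R ω = true) :=
        mul_right_cancel₀ hq1 hb
      have kY1 : prNum p Y0 (fun ω => U ω = u ∧ X ω = x ∧ R ω = true)
            * pr p (fun ω => U ω = u ∧ X ω = x)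
          = pr p (fun ω => U ω = u ∧ X ω = x ∧ R ω = true)
            * (∑ y ∈ Finset.univ.image Y0, ∑ w,
                y * pr p (fun ω => (Y0 ω = y ∧ W ω = w) ∧ U ω = u ∧ X ω = x)) :=
        key (fun y _ => y) true
      have kH1 : prNum p (fun ω => h (W ω) x) (fun ω => U ω = u ∧ X ω = x ∧ R ω = true)
            * pr p (fun ω => U ω = u ∧ X ω = x)
          = pr p (fun ω => U ω = u ∧ X ω = x ∧ R ω = true)
            * (∑ y ∈ Finset.univ.image Y0, ∑ w,
                h w x * pr p (fun ω => (Y0 ω = y ∧ W ω = w) ∧ U ω = u ∧ X ω = x)) :=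
        key (fun _ w => h w x) true
      have kY0 : prNum p Y0 (fun ω => U ω = u ∧ X ω = x ∧ R ω = false)
            * pr p (fun ω => U ω = u ∧ X ω = x)
          = pr p (fun ω => U ω = u ∧ X ω = x ∧ R ω = false)
            * (∑ y ∈ Finset.univ.image Y0, ∑ w,
                y * pr p (fun ω => (Y0 ω = y ∧ W ω = w) ∧ U ω = u ∧ X ω = x)) :=
        key (fun y _ => y) false
      have kH0 : prNum p (fun ω => h (W ω) x) (fun ω => U ω = u ∧ X ω = x ∧ R ω = false)
            * pr p (fun ω => U ω = u ∧ X ω = x)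
          = pr p (fun ω => U ω = u ∧ X ω = x ∧ R ω = false)
            * (∑ y ∈ Finset.univ.image Y0, ∑ w,
                h w x * pr p (fun ω => (Y0 ω = y ∧ W ω = w) ∧ U ω = u ∧ X ω = x)) :=
        key (fun _ w => h w x) false
      rw [hsub true] at hbN
      have hT : (∑ y ∈ Finset.univ.image Y0, ∑ w,
              y * pr p (fun ω => (Y0 ω = y ∧ W ω = w) ∧ U ω = u ∧ X ω = x))
          = ∑ y ∈ Finset.univ.image Y0, ∑ w,
              h w x * pr p (fun ω => (Y0 ω = y ∧ W ω = w) ∧ U ω = u ∧ X ω = x) := by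
        refine mul_left_cancel₀ hq1 ?_
        rw [← kY1, ← kH1, hbN]
      rw [hsub false]
      refine mul_right_cancel₀ hq ?_
      rw [kY0, kH0, hT]
    · -- degenerate stratum: everything vanishes
      have hz : pr p (fun ω => U ω = u ∧ X ω = x ∧ R ω = false) = 0 :=
        le_antisymm (not_lt.mp h0) (pr_nonneg p hp _)
      have hzero := pr_zero_forall p hp hz
      have e1 : ∀ t : Ω → ℝ,
          prNum p t (fun ω => U ω = u ∧ X ω = x ∧ R ω = false) = 0 := by
        intro t
        refine Finset.sum_eq_zero fun ω _ => ?_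
        by_cases hc : U ω = u ∧ X ω = x ∧ R ω = false
        · rw [if_pos hc, hzero ω hc, zero_mul]
        · rw [if_neg hc]
      rw [e1 Y0, e1 (fun ω => h (W ω) (X ω))]
  -- Assemble over strata
  rw [cex_eq, cex_eq]
  congr 1
  rw [← prNum_split p Y0 U X (fun ω => R ω = false),
    ← prNum_split p (fun ω => h (W ω) (X ω)) U X (fun ω => R ω = false)]
  exact Finset.sum_congr rfl fun u _ => Finset.sum_congr rfl fun x _ => hNfinal u x
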